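/- arXiv:2011.07932 — 2 statements merged into one kernel-verified Lean document; each statement's English description precedes it below -/
import Mathlib

section
/- Regularized NWJ (ReNWJ) representation of the KL divergence: assume KL(μ‖ν) < ∞ and f > 0 ν-almost everywhere, and let d be a metric on ℝ. Then the supremum, over all measurable functions T : Ω → ℝ such that T is μ-integrable and e^{T−1} is ν-integrable, of the quantity ∫ T dμ − ∫ e^{T−1} dν − d(∫ e^{T−1} dν, 1) equals KL(μ‖ν). -/
/-!
The pointwise inequality `t - log x ≤ exp (t - 1) / x` (for `x > 0`), applied with `x = f = dμ/dν`
and integrated against `μ`, gives the NWJ bound `∫ T dμ - KL(μ‖ν) ≤ ∫ exp (T - 1) / f dμ =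
∫ exp (T - 1) dν`; since `d ≥ 0`, every element of the set is at most `KL(μ‖ν)`.
The bound is attained by `T = 1 + log f`: then `exp (T - 1) = f` and `∫ f dν = 1`,
so the penalty `d (∫ exp (T - 1) dν) 1` vanishes.
-/

open MeasureTheory Real

lemma Real.sub_log_le_exp_sub_one_div (t : ℝ) {x : ℝ} (hx : 0 < x) :
    t - log x ≤ exp (t - 1) / x := by
  have h := add_one_le_exp (t - 1 - log x)
  rw [exp_sub, exp_log hx] at h
  linarith

lemma nonneg_of_self_eq_zero_of_symm_of_triangle {α : Type*} {d : α → α → ℝ}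
    (hd_self : ∀ x, d x x = 0) (hd_symm : ∀ x y, d x y = d y x)
    (hd_triangle : ∀ x y z, d x z ≤ d x y + d y z) (x y : α) : 0 ≤ d x y := by
  have h := hd_triangle x y x
  rw [hd_self, hd_symm y x] at h
  linarith

section RNDeriv

variable {Ω : Type*} [MeasurableSpace Ω] {μ ν : Measure Ω}

lemma toReal_rnDeriv_mul_div_ae_eq (hpos : ∀ᵐ ω ∂ν, 0 < (μ.rnDeriv ν ω).toReal) (g : Ω → ℝ) :
    (fun ω ↦ (μ.rnDeriv ν ω).toReal * (g ω / (μ.rnDeriv ν ω).toReal)) =ᵐ[ν] g := by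
  filter_upwards [hpos] with ω hω using mul_div_cancel₀ _ hω.ne'

lemma exp_llr_ae_eq_of_pos (hpos : ∀ᵐ ω ∂ν, 0 < (μ.rnDeriv ν ω).toReal) :
    (fun ω ↦ exp (llr μ ν ω)) =ᵐ[ν] fun ω ↦ (μ.rnDeriv ν ω).toReal := by
  filter_upwards [hpos] with ω hω using exp_log hω

variable [SigmaFinite μ]

lemma integrable_div_toReal_rnDeriv [μ.HaveLebesgueDecomposition ν] (hac : μ ≪ ν)
    (hpos : ∀ᵐ ω ∂ν, 0 < (μ.rnDeriv ν ω).toReal) {g : Ω → ℝ} (hg : Integrable g ν) :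
    Integrable (fun ω ↦ g ω / (μ.rnDeriv ν ω).toReal) μ :=
  (integrable_toReal_rnDeriv_mul_iff hac).1 (hg.congr (toReal_rnDeriv_mul_div_ae_eq hpos g).symm)

lemma integral_div_toReal_rnDeriv [μ.HaveLebesgueDecomposition ν] (hac : μ ≪ ν)
    (hpos : ∀ᵐ ω ∂ν, 0 < (μ.rnDeriv ν ω).toReal) (g : Ω → ℝ) :
    ∫ ω, g ω / (μ.rnDeriv ν ω).toReal ∂μ = ∫ ω, g ω ∂ν := by
  rw [← integral_toReal_rnDeriv_mul hac]
  exact integral_congr_ae (toReal_rnDeriv_mul_div_ae_eq hpos g)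

lemma integral_sub_integral_exp_sub_one_le_integral_llr [μ.HaveLebesgueDecomposition ν]
    (hac : μ ≪ ν) (hKL : Integrable (llr μ ν) μ) (hpos : ∀ᵐ ω ∂ν, 0 < (μ.rnDeriv ν ω).toReal)
    {T : Ω → ℝ} (hT : Integrable T μ) (hexp : Integrable (fun ω ↦ exp (T ω - 1)) ν) :
    ∫ ω, T ω ∂μ - ∫ ω, exp (T ω - 1) ∂ν ≤ ∫ ω, llr μ ν ω ∂μ := by
  have hpointwise : ∀ᵐ ω ∂μ, T ω - llr μ ν ω ≤ exp (T ω - 1) / (μ.rnDeriv ν ω).toReal := by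
    filter_upwards [hac.ae_le hpos] with ω hω using sub_log_le_exp_sub_one_div (T ω) hω
  have h : ∫ ω, (T ω - llr μ ν ω) ∂μ ≤ ∫ ω, exp (T ω - 1) / (μ.rnDeriv ν ω).toReal ∂μ :=
    integral_mono_ae (hT.sub hKL) (integrable_div_toReal_rnDeriv hac hpos hexp) hpointwise
  rw [integral_sub hT hKL, integral_div_toReal_rnDeriv hac hpos] at h
  linarith

lemma integral_exp_llr_of_pos [SigmaFinite ν] (hac : μ ≪ ν)
    (hpos : ∀ᵐ ω ∂ν, 0 < (μ.rnDeriv ν ω).toReal) :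
    ∫ ω, exp (llr μ ν ω) ∂ν = μ.real Set.univ := by
  rw [integral_congr_ae (exp_llr_ae_eq_of_pos hpos), Measure.integral_toReal_rnDeriv hac]

end RNDeriv

/-- Regularized NWJ (ReNWJ) representation of the KL divergence: if
`KL(μ‖ν) = ∫ log f dμ` is finite (i.e. `log f` is μ-integrable, `f = dμ/dν`),
`f > 0` ν-a.e., and `d` is a metric on `ℝ`, then the supremum, over all measurable
`T : Ω → ℝ` with `T` μ-integrable and `e^(T−1)` ν-integrable, of
`∫ T dμ − ∫ e^(T−1) dν − d (∫ e^(T−1) dν) 1` equals `KL(μ‖ν)`. -/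
theorem reNWJ_representation
    {Ω : Type*} [MeasurableSpace Ω]
    (μ ν : Measure Ω) [IsProbabilityMeasure μ] [IsProbabilityMeasure ν]
    (hac : μ ≪ ν)
    (hKL : Integrable (fun ω => Real.log ((μ.rnDeriv ν ω).toReal)) μ)
    (hpos : ∀ᵐ ω ∂ν, 0 < ((μ.rnDeriv ν ω).toReal))
    (d : ℝ → ℝ → ℝ)
    (hd_eq : ∀ x y, d x y = 0 ↔ x = y)
    (hd_symm : ∀ x y, d x y = d y x)
    (hd_triangle : ∀ x y z, d x z ≤ d x y + d y z) :
    IsLUB {r : ℝ | ∃ T : Ω → ℝ, Measurable T ∧ Integrable T μ ∧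
        Integrable (fun ω => Real.exp (T ω - 1)) ν ∧
        r = ∫ ω, T ω ∂μ - ∫ ω, Real.exp (T ω - 1) ∂ν
            - d (∫ ω, Real.exp (T ω - 1) ∂ν) 1}
      (∫ ω, Real.log ((μ.rnDeriv ν ω).toReal) ∂μ) := by
  change Integrable (llr μ ν) μ at hKL
  change IsLUB _ (∫ ω, llr μ ν ω ∂μ)
  have hd_self : ∀ x, d x x = 0 := fun x ↦ (hd_eq x x).2 rfl
  refine ⟨?_, fun b hb ↦ hb ⟨fun ω ↦ llr μ ν ω + 1, ?_, hKL.add (integrable_const 1), ?_, ?_⟩⟩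
  · rintro r ⟨T, -, hT, hexp, rfl⟩
    have hNWJ := integral_sub_integral_exp_sub_one_le_integral_llr hac hKL hpos hT hexp
    have hd_nonneg :=
      nonneg_of_self_eq_zero_of_symm_of_triangle hd_self hd_symm hd_triangle (∫ ω, exp (T ω - 1) ∂ν) 1
    linarith
  · exact (measurable_llr μ ν).add_const 1
  · simp only [add_sub_cancel_right]
    exact Measure.integrable_toReal_rnDeriv.congr (exp_llr_ae_eq_of_pos hpos).symm
  · simp only [add_sub_cancel_right]
    rw [integral_exp_llr_of_pos hac hpos, probReal_univ, hd_self,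
      integral_add hKL (integrable_const 1), integral_const, probReal_univ, one_smul]
    ring
end

section
/- Approximation of the ReDV value by bounded critics: assume KL(μ‖ν) < ∞ and f > 0 ν-almost everywhere, let d be a metric on ℝ and C* ∈ ℝ. Then for every η > 0 there exists a bounded measurable function T : Ω → ℝ (in particular T is μ-integrable and e^T is ν-integrable) such that KL(μ‖ν) − η ≤ ∫ T dμ − log(∫ e^T dν) − d(log(∫ e^T dν), C*) ≤ KL(μ‖ν). -/
/-!
The Donsker–Varadhan functional `T ↦ ∫ T dμ - log ∫ exp T dν` is bounded by `KL(μ‖ν)` and is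
invariant under adding a constant to `T`. The truncations of `log f` to `[-n, n]` are bounded
critics whose values tend to `KL(μ‖ν)` by dominated convergence: `∫ clip n (log f) dμ → KL` with
dominant `|log f|`, and `∫ exp (clip n (log f)) dν → ∫ f dν = 1` with dominant `1 + f`, since
`exp (log f) = f` ν-a.e. Shifting a good truncation by `C* - log ∫ exp T dν` makes
`log ∫ exp T dν = C*`, so the penalty `d (log ∫ exp T dν) C*` vanishes.
-/

open MeasureTheory Real Filter Topology

def clip (n : ℕ) (x : ℝ) : ℝ := max (-n) (min n x)

lemma continuous_clip (n : ℕ) : Continuous (clip n) := by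
  unfold clip; fun_prop

lemma abs_clip_le (n : ℕ) (x : ℝ) : |clip n x| ≤ n :=
  abs_le.2 ⟨le_max_left _ _, max_le (by simp) (min_le_left _ _)⟩

lemma abs_clip_le_abs (n : ℕ) (x : ℝ) : |clip n x| ≤ |x| :=
  abs_le.2 ⟨le_max_of_le_right (le_min (by linarith [abs_nonneg x, n.cast_nonneg (α := ℝ)])
    (neg_abs_le x)), max_le (by linarith [abs_nonneg x, n.cast_nonneg (α := ℝ)])
      ((min_le_right _ _).trans (le_abs_self x))⟩

lemma clip_le_max_zero (n : ℕ) (x : ℝ) : clip n x ≤ max 0 x :=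
  max_le (by simp) ((min_le_right _ _).trans (le_max_right _ _))

lemma eventually_clip_eq (x : ℝ) : ∀ᶠ n in atTop, clip n x = x := by
  filter_upwards [eventually_ge_atTop ⌈|x|⌉₊] with n hn
  have hxn := abs_le.1 ((Nat.le_ceil _).trans (Nat.cast_le.2 hn) : |x| ≤ n)
  rw [clip, min_eq_right hxn.2, max_eq_right hxn.1]

lemma tendsto_clip (x : ℝ) : Tendsto (clip · x) atTop (𝓝 x) :=
  tendsto_const_nhds.congr' (EventuallyEq.symm (eventually_clip_eq x))

namespace MeasureTheory

variable {α : Type*} [MeasurableSpace α] {μ ν : Measure α}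

lemma Measure.AbsolutelyContinuous.neZero [NeZero μ] (hμν : μ ≪ ν) : NeZero ν :=
  ⟨fun hν => NeZero.ne μ (Measure.absolutelyContinuous_zero_iff.mp (hν ▸ hμν))⟩

-- Donsker–Varadhan: Gibbs' inequality for `μ` against the tilted measure `ν.tilted T`.
lemma integral_sub_log_integral_exp_le_integral_llr [IsProbabilityMeasure μ] [SigmaFinite ν]
    (hμν : μ ≪ ν) (h_int : Integrable (llr μ ν) μ) {T : α → ℝ} (hTμ : Integrable T μ)
    (hTν : Integrable (fun x => exp (T x)) ν) :
    ∫ x, T x ∂μ - log (∫ x, exp (T x) ∂ν) ≤ ∫ x, llr μ ν x ∂μ := by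
  have := hμν.neZero
  have := isProbabilityMeasure_tilted hTν
  have hμ_tilted : μ ≪ ν.tilted T := hμν.trans (absolutelyContinuous_tilted hTν)
  have gibbs := InformationTheory.integral_llr_add_sub_measure_univ_nonneg hμ_tilted
    (integrable_llr_tilted_right hμν hTμ h_int hTν)
  rw [integral_llr_tilted_right hμν hTμ hTν h_int] at gibbs
  simp only [probReal_univ] at gibbs
  linarith

lemma log_integral_exp_add_const [NeZero ν] {T : α → ℝ}
    (hT : Integrable (fun x => exp (T x)) ν) (c : ℝ) :
    log (∫ x, exp (T x + c) ∂ν) = log (∫ x, exp (T x) ∂ν) + c := by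
  simp_rw [exp_add]
  rw [integral_mul_const, log_mul (integral_exp_pos hT).ne' (exp_pos c).ne', log_exp]

lemma integrable_exp_of_abs_le [IsFiniteMeasure μ] {T : α → ℝ} (hT : Measurable T) {B : ℝ}
    (hB : ∀ x, |T x| ≤ B) : Integrable (fun x => exp (T x)) μ :=
  .of_bound hT.exp.aestronglyMeasurable (exp B) <| ae_of_all _ fun x => by
    rw [norm_of_nonneg (exp_pos _).le]
    exact exp_le_exp.2 ((le_abs_self _).trans (hB x))

lemma tendsto_integral_clip {g : α → ℝ} (hg : Integrable g μ) :
    Tendsto (fun n => ∫ x, clip n (g x) ∂μ) atTop (𝓝 (∫ x, g x ∂μ)) :=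
  tendsto_integral_of_dominated_convergence (fun x => |g x|)
    (fun n => (continuous_clip n).comp_aestronglyMeasurable hg.1) hg.abs
    (fun n => ae_of_all _ fun x => abs_clip_le_abs n (g x))
    (ae_of_all _ fun x => tendsto_clip (g x))

lemma tendsto_integral_exp_clip_log [IsFiniteMeasure μ] {g : α → ℝ} (hg : Integrable g μ)
    (hg_pos : ∀ᵐ x ∂μ, 0 < g x) :
    Tendsto (fun n => ∫ x, exp (clip n (log (g x))) ∂μ) atTop (𝓝 (∫ x, g x ∂μ)) := by
  refine tendsto_integral_of_dominated_convergence (fun x => 1 + g x)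
    (fun n => (continuous_exp.comp (continuous_clip n)).comp_aestronglyMeasurable
      (measurable_log.comp_aemeasurable hg.1.aemeasurable).aestronglyMeasurable)
    ((integrable_const 1).add hg) (fun n => ?_) ?_
  · filter_upwards [hg_pos] with x hx
    rw [norm_of_nonneg (exp_pos _).le]
    calc exp (clip n (log (g x)))
        ≤ exp (max 0 (log (g x))) := exp_le_exp.2 (clip_le_max_zero _ _)
      _ = max 1 (g x) := by rw [exp_monotone.map_max, exp_zero, exp_log hx]
      _ ≤ 1 + g x := max_le (by linarith) (by linarith)
  · filter_upwards [hg_pos] with x hx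
    simpa only [Function.comp_def, exp_log hx] using
      (continuous_exp.tendsto _).comp (tendsto_clip (log (g x)))

lemma tendsto_integral_clip_llr_sub_log_integral_exp
    [IsProbabilityMeasure μ] [IsFiniteMeasure ν]
    (hμν : μ ≪ ν) (h_int : Integrable (llr μ ν) μ)
    (h_pos : ∀ᵐ x ∂ν, 0 < (μ.rnDeriv ν x).toReal) :
    Tendsto (fun n => ∫ x, clip n (llr μ ν x) ∂μ - log (∫ x, exp (clip n (llr μ ν x)) ∂ν))
      atTop (𝓝 (∫ x, llr μ ν x ∂μ)) := by
  have h_exp : Tendsto (fun n => ∫ x, exp (clip n (llr μ ν x)) ∂ν) atTop (𝓝 1) := by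
    simpa [llr, Measure.integral_toReal_rnDeriv hμν] using
      tendsto_integral_exp_clip_log Measure.integrable_toReal_rnDeriv h_pos
  simpa using (tendsto_integral_clip h_int).sub
    ((continuousAt_log one_ne_zero).tendsto.comp h_exp)

end MeasureTheory

theorem reDV_approximation_by_bounded_critics_general
    {Ω : Type*} [MeasurableSpace Ω]
    (μ ν : Measure Ω) [IsProbabilityMeasure μ] [IsProbabilityMeasure ν]
    (hac : μ ≪ ν)
    (hKL : Integrable (fun ω => Real.log ((μ.rnDeriv ν ω).toReal)) μ)
    (hpos : ∀ᵐ ω ∂ν, 0 < ((μ.rnDeriv ν ω).toReal))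
    (d : ℝ → ℝ → ℝ)
    (hd_eq : ∀ x y, d x y = 0 ↔ x = y)
    (Cstar : ℝ) :
    ∀ η > (0 : ℝ), ∃ T : Ω → ℝ, Measurable T ∧ (∃ B : ℝ, ∀ ω, |T ω| ≤ B) ∧
      Integrable T μ ∧ Integrable (fun ω => Real.exp (T ω)) ν ∧
      (∫ ω, Real.log ((μ.rnDeriv ν ω).toReal) ∂μ) - η
        ≤ ∫ ω, T ω ∂μ - Real.log (∫ ω, Real.exp (T ω) ∂ν)
            - d (Real.log (∫ ω, Real.exp (T ω) ∂ν)) Cstar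
      ∧ ∫ ω, T ω ∂μ - Real.log (∫ ω, Real.exp (T ω) ∂ν)
            - d (Real.log (∫ ω, Real.exp (T ω) ∂ν)) Cstar
        ≤ ∫ ω, Real.log ((μ.rnDeriv ν ω).toReal) ∂μ := by
  intro η hη
  rw [← llr_def] at hKL ⊢
  obtain ⟨n, hn⟩ := ((tendsto_integral_clip_llr_sub_log_integral_exp hac hKL hpos)
    |>.eventually_const_le (sub_lt_self _ hη)).exists
  set T := fun x => clip n (llr μ ν x)
  have hT : Measurable T := (continuous_clip n).measurable.comp (measurable_llr μ ν)
  have hT_le : ∀ x, |T x| ≤ n := fun x => abs_clip_le n _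
  have hTμ : Integrable T μ := .of_bound hT.aestronglyMeasurable n (ae_of_all _ hT_le)
  set c := Cstar - log (∫ x, exp (T x) ∂ν)
  have hTc_le : ∀ x, |T x + c| ≤ n + |c| := fun x =>
    (abs_add_le _ _).trans (add_le_add_left (hT_le x) _)
  have hTcν := integrable_exp_of_abs_le (μ := ν) (hT.add_const c) hTc_le
  have hlog : log (∫ x, exp (T x + c) ∂ν) = Cstar := by
    rw [log_integral_exp_add_const (integrable_exp_of_abs_le hT hT_le)]; ring
  have hmean : ∫ x, (T x + c) ∂μ = ∫ x, T x ∂μ + c := by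
    rw [integral_add hTμ (integrable_const c)]; simp
  have hTcμ : Integrable (fun x => T x + c) μ := hTμ.add (integrable_const c)
  refine ⟨fun x => T x + c, hT.add_const c, ⟨_, hTc_le⟩, hTcμ, hTcν, ?_, ?_⟩
  · rw [hlog, (hd_eq _ _).2 rfl, hmean]
    linarith
  · rw [(hd_eq _ _).2 hlog, sub_zero]
    exact integral_sub_log_integral_exp_le_integral_llr hac hKL hTcμ hTcν

/-- Approximation of the ReDV value by bounded critics: if `KL(μ‖ν) = ∫ log f dμ` is finite
(i.e. `log f` is μ-integrable, `f = dμ/dν`), `f > 0` ν-a.e., `d` is a metric on `ℝ` and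
`C* ∈ ℝ`, then for every `η > 0` there is a bounded measurable `T : Ω → ℝ` (in particular
`T` is μ-integrable and `e^T` is ν-integrable) with
`KL(μ‖ν) − η ≤ ∫ T dμ − log (∫ e^T dν) − d (log (∫ e^T dν)) C* ≤ KL(μ‖ν)`. -/
theorem reDV_approximation_by_bounded_critics
    {Ω : Type*} [MeasurableSpace Ω]
    (μ ν : Measure Ω) [IsProbabilityMeasure μ] [IsProbabilityMeasure ν]
    (hac : μ ≪ ν)
    (hKL : Integrable (fun ω => Real.log ((μ.rnDeriv ν ω).toReal)) μ)
    (hpos : ∀ᵐ ω ∂ν, 0 < ((μ.rnDeriv ν ω).toReal))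
    (d : ℝ → ℝ → ℝ)
    (hd_eq : ∀ x y, d x y = 0 ↔ x = y)
    (hd_symm : ∀ x y, d x y = d y x)
    (hd_triangle : ∀ x y z, d x z ≤ d x y + d y z)
    (Cstar : ℝ) :
    ∀ η > (0 : ℝ), ∃ T : Ω → ℝ, Measurable T ∧ (∃ B : ℝ, ∀ ω, |T ω| ≤ B) ∧
      Integrable T μ ∧ Integrable (fun ω => Real.exp (T ω)) ν ∧
      (∫ ω, Real.log ((μ.rnDeriv ν ω).toReal) ∂μ) - η
        ≤ ∫ ω, T ω ∂μ - Real.log (∫ ω, Real.exp (T ω) ∂ν)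
            - d (Real.log (∫ ω, Real.exp (T ω) ∂ν)) Cstar
      ∧ ∫ ω, T ω ∂μ - Real.log (∫ ω, Real.exp (T ω) ∂ν)
            - d (Real.log (∫ ω, Real.exp (T ω) ∂ν)) Cstar
        ≤ ∫ ω, Real.log ((μ.rnDeriv ν ω).toReal) ∂μ :=
  reDV_approximation_by_bounded_critics_general μ ν hac hKL hpos d hd_eq Cstar
end
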